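/- (Jacobi's triple product identity) Let q, z be complex numbers with 0 < |q| < 1 and z ≠ 0. Then ∑_{k=-∞}^{∞} q^{k²} z^k = (q²;q²)_∞ (-qz;q²)_∞ (-q/z;q²)_∞. -/

import Mathlib

open Finset Filter Topology
namespace JTP
noncomputable def gb (t : ℂ) : ℕ → ℕ → ℂ
  | 0, 0 => 1
  | 0, _+1 => 0
  | _+1, 0 => 1
  | n+1, m+1 => gb t n (m+1) + t ^ (n - m) * gb t n m
lemma gb_zero_right (t : ℂ) (n : ℕ) : gb t n 0 = 1 := by cases n <;> rfl
lemma gb_eq_zero (t : ℂ) {n m : ℕ} (h : n < m) : gb t n m = 0 := by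
  induction n generalizing m with
  | zero => match m, h with | m+1, _ => rfl
  | succ n ih =>
    match m, h with
    | m+1, h =>
      show gb t n (m+1) + t ^ (n - m) * gb t n m = 0
      rw [ih (by omega), ih (by omega), mul_zero, add_zero]
lemma gb_diag (t : ℂ) (n : ℕ) : gb t n n = 1 := by
  induction n with
  | zero => rfl
  | succ n ih =>
    show gb t n (n+1) + t ^ (n - n) * gb t n n = 1
    rw [gb_eq_zero t (by omega), ih, Nat.sub_self, pow_zero, zero_add, one_mul]

noncomputable def Qp (t : ℂ) (n : ℕ) : ℂ := ∏ i ∈ range n, (1 - t ^ (i+1))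

lemma Qp_zero (t : ℂ) : Qp t 0 = 1 := rfl
lemma Qp_succ (t : ℂ) (n : ℕ) : Qp t (n+1) = Qp t n * (1 - t ^ (n+1)) :=
  Finset.prod_range_succ _ _

lemma gb_mul (t : ℂ) : ∀ {n m : ℕ}, m ≤ n →
    gb t n m * (Qp t m * Qp t (n - m)) = Qp t n := by
  intro n
  induction n with
  | zero => intro m hm; interval_cases m; simp [gb, Qp_zero]
  | succ n ih =>
    intro m hm
    match m with
    | 0 => simp [gb_zero_right, Qp_zero]
    | m+1 =>
      show (gb t n (m+1) + t ^ (n - m) * gb t n m) * (Qp t (m+1) * Qp t (n + 1 - (m+1))) = _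
      rcases Nat.lt_or_ge m n with hlt | hge
      · -- m + 1 ≤ n
        have h1 : n + 1 - (m+1) = (n - (m+1)) + 1 := by omega
        have h2 : (n - (m+1)) + 1 = n - m := by omega
        rw [h1, Qp_succ, Qp_succ, h2]
        have ihA := ih (show m + 1 ≤ n by omega)
        have ihB := ih (show m ≤ n by omega)
        calc (gb t n (m+1) + t ^ (n - m) * gb t n m) *
              (Qp t m * (1 - t ^ (m+1)) * (Qp t (n - (m+1)) * (1 - t ^ (n - m))))
            = gb t n (m+1) * (Qp t (m+1) * Qp t (n - (m+1))) * (1 - t ^ (n-m))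
              + t ^ (n - m) * (1 - t ^ (m+1)) * (gb t n m * (Qp t m * Qp t (n - m))) := by
              rw [Qp_succ, ← h2, Qp_succ, h2]; ring
          _ = Qp t n * (1 - t ^ (n-m)) + t ^ (n - m) * (1 - t ^ (m+1)) * Qp t n := by
              rw [ihA, ihB]
          _ = Qp t n * (1 - t ^ (n+1)) := by
              have h3 : t ^ (n - m) * t ^ (m+1) = t ^ (n+1) := by
                rw [← pow_add]; congr 1; omega
              linear_combination (-(Qp t n)) * h3
          _ = Qp t (n+1) := (Qp_succ t n).symm
      · -- m = n
        have hmn : m = n := by omega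
        subst hmn
        rw [gb_eq_zero t (by omega), gb_diag]
        simp [Qp]
def Tm (m : ℕ) : ℕ := ∑ i ∈ range m, i

lemma Tm_succ (m : ℕ) : Tm (m+1) = Tm m + m := Finset.sum_range_succ _ _

lemma two_Tm (m : ℕ) : 2 * Tm m = m * (m - 1) := by
  rw [Tm, mul_comm]; exact Finset.sum_range_id_mul_two m

lemma gauss_binomial (t x : ℂ) (n : ℕ) :
    ∏ j ∈ range n, (1 + x * t ^ j) = ∑ m ∈ range (n+1), gb t n m * t ^ Tm m * x ^ m := by
  induction n with
  | zero => simp [gb, Tm]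
  | succ n ih =>
    rw [prod_range_succ, ih, Finset.sum_range_succ' _ (n+1)]
    have h0 : ∀ k : ℕ, gb t k 0 * t ^ Tm 0 * x ^ 0 = 1 := by
      intro k; simp [gb_zero_right, Tm]
    rw [h0]
    rw [Finset.sum_range_succ' _ n, h0]
    -- LHS: ((∑ m in range n, a n (m+1)) + 1) * (1 + x * t^n)
    -- RHS: (∑ m in range (n+1), a (n+1) (m+1)) + 1
    have key : ∀ m ∈ range (n+1),
        gb t (n+1) (m+1) * t ^ Tm (m+1) * x ^ (m+1)
        = gb t n (m+1) * t ^ Tm (m+1) * x ^ (m+1)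
          + (gb t n m * t ^ Tm m * x ^ m) * (x * t ^ n) := by
      intro m hm
      have hm' : m ≤ n := by simpa using Nat.lt_succ_iff.mp (mem_range.mp hm)
      show (gb t n (m+1) + t ^ (n - m) * gb t n m) * t ^ Tm (m+1) * x ^ (m+1) = _
      have hexp : t ^ (n - m) * t ^ Tm (m+1) = t ^ Tm m * t ^ n := by
        rw [← pow_add, ← pow_add, Tm_succ]; congr 1; omega
      rw [add_mul, add_mul]
      congr 1
      calc t ^ (n-m) * gb t n m * t ^ Tm (m+1) * x ^ (m+1)
          = (t ^ (n-m) * t ^ Tm (m+1)) * gb t n m * x ^ (m+1) := by ring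
        _ = (t ^ Tm m * t ^ n) * gb t n m * x ^ (m+1) := by rw [hexp]
        _ = gb t n m * t ^ Tm m * x ^ m * (x * t ^ n) := by rw [pow_succ]; ring
    rw [Finset.sum_congr rfl key, Finset.sum_add_distrib]
    rw [Finset.sum_range_succ _ n, gb_eq_zero t (by omega)]
    rw [← Finset.sum_mul, Finset.sum_range_succ' (fun i => gb t n i * t ^ Tm i * x ^ i) n, h0]
    ring


lemma two_Tm' (m : ℕ) : 2 * Tm m + m = m * m := by
  induction m with
  | zero => rfl
  | succ m ih => rw [Tm_succ]; nlinarith [ih]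

lemma zpow_sum_range (a : ℂ) (ha : a ≠ 0) (f : ℕ → ℤ) (N : ℕ) :
    ∏ j ∈ range N, a ^ f j = a ^ (∑ j ∈ range N, f j) := by
  induction N with
  | zero => simp
  | succ N ih => rw [prod_range_succ, sum_range_succ, ih, zpow_add₀ ha]

lemma sumE (N : ℕ) : (∑ j ∈ range N, (2*(j:ℤ)+1-2*N)) = -(N:ℤ)^2 := by
  induction N with
  | zero => simp
  | succ N ih =>
    rw [sum_range_succ]
    have h : ∀ j ∈ range N, (2*(j:ℤ)+1-2*(N+1:ℕ)) = (2*(j:ℤ)+1-2*N) + (-2) := by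
      intro j _; push_cast; ring
    rw [Finset.sum_congr rfl h, Finset.sum_add_distrib, ih, Finset.sum_const]
    simp only [card_range, nsmul_eq_mul]
    push_cast; ring

lemma finiteJTP (q z : ℂ) (hq : q ≠ 0) (hz : z ≠ 0) (N : ℕ) :
    ∑ k ∈ Finset.Icc (-(N:ℤ)) N, gb (q^2) (2*N) ((k + N).toNat) * q ^ (k^2) * z ^ k
    = (∏ l ∈ range N, (1 + z * q ^ (2*l+1))) * ∏ l ∈ range N, (1 + z⁻¹ * q ^ (2*l+1)) := by
  set t : ℂ := q ^ 2 with ht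
  set x : ℂ := z * q ^ (1 - 2*(N:ℤ)) with hxdef
  set c : ℂ := q ^ ((N:ℤ)^2) * z ^ (-(N:ℤ)) with hcdef
  -- Step A : reindex
  have hmap : Finset.Icc (-(N:ℤ)) N
      = (range (2*N+1)).map ⟨fun m : ℕ => (m:ℤ) - N,
        (show Function.Injective (fun m : ℕ => (m:ℤ) - N) from fun a b h => by simpa using h)⟩ := by
    ext k
    simp only [Finset.mem_Icc, Finset.mem_map, Finset.mem_range, Function.Embedding.coeFn_mk]
    constructor
    · intro hk; exact ⟨(k + N).toNat, by omega, by omega⟩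
    · rintro ⟨m, hm, rfl⟩; omega
  rw [hmap, Finset.sum_map]
  simp only [Function.Embedding.coeFn_mk]
  -- Step B : termwise to Gauss form
  have key : ∀ m ∈ range (2*N+1),
      gb t (2*N) (((m:ℤ) - N + N).toNat) * q ^ (((m:ℤ)-N)^2) * z ^ ((m:ℤ)-N)
      = c * (gb t (2*N) m * t ^ Tm m * x ^ m) := by
    intro m _
    have htoNat : ((m:ℤ) - N + N).toNat = m := by omega
    have hx : x ^ m = z ^ m * q ^ ((1 - 2*(N:ℤ)) * m) := by
      rw [hxdef, mul_pow, ← zpow_natCast (q ^ (1 - 2*(N:ℤ))) m, ← zpow_mul]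
    have hT := two_Tm' m
    have e1 : q ^ (((m:ℤ)-N)^2) = q ^ ((N:ℤ)^2) * (t ^ Tm m * q ^ ((1 - 2*(N:ℤ)) * m)) := by
      rw [ht, ← pow_mul, ← zpow_natCast q (2 * Tm m), ← zpow_add₀ hq, ← zpow_add₀ hq]
      congr 1
      have hT' : 2 * ((Tm m : ℤ)) + m = m * m := by exact_mod_cast hT
      push_cast
      linear_combination (-1 : ℤ) * hT'
    have e2 : z ^ ((m:ℤ)-N) = z ^ (-(N:ℤ)) * z ^ m := by
      rw [← zpow_natCast z m, ← zpow_add₀ hz]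
      congr 1; ring
    rw [htoNat, hx, e1, e2, hcdef]
    ring
  rw [Finset.sum_congr rfl key, ← Finset.mul_sum, ← gauss_binomial]
  -- Step C : split the product
  rw [two_mul N, prod_range_add]
  have hsecond : ∀ i ∈ range N, (1 + x * t ^ (N + i)) = 1 + z * q ^ (2*i+1) := by
    intro i _
    have hh : x * t ^ (N + i) = z * q ^ (2*i+1) := by
      rw [hxdef, ht, ← pow_mul, ← zpow_natCast q (2*(N+i)), ← zpow_natCast q (2*i+1),
        mul_assoc, ← zpow_add₀ hq]
      congr 1
      push_cast; ring
    rw [hh]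
  have hfirst : ∀ j ∈ range N,
      (1 + x * t ^ j) = (z * q ^ (2*(j:ℤ)+1-2*N)) * (1 + z⁻¹ * q ^ (2*(N-1-j)+1)) := by
    intro j hj
    have hj' : j < N := mem_range.mp hj
    have hxt : x * t ^ j = z * q ^ (2*(j:ℤ)+1-2*N) := by
      rw [hxdef, ht, ← pow_mul, ← zpow_natCast q (2*j), mul_assoc, ← zpow_add₀ hq]
      congr 2; push_cast; ring
    have hq2 : (q ^ (2*(j:ℤ)+1-2*N)) * q ^ (2*(N-1-j)+1) = 1 := by
      rw [← zpow_natCast q (2*(N-1-j)+1), ← zpow_add₀ hq]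
      rw [show (2*(j:ℤ)+1-2*N) + ((2*(N-1-j)+1 : ℕ) : ℤ) = 0 by push_cast; omega]
      exact zpow_zero q
    rw [mul_add, mul_one, mul_comm (z * q ^ (2*(j:ℤ)+1-2*N)) (z⁻¹ * q ^ (2*(N-1-j)+1))]
    rw [show z⁻¹ * q ^ (2*(N-1-j)+1) * (z * q ^ (2*(j:ℤ)+1-2*N))
        = (z⁻¹ * z) * (q ^ (2*(j:ℤ)+1-2*N) * q ^ (2*(N-1-j)+1)) by ring]
    rw [inv_mul_cancel₀ hz, hq2, one_mul, hxt, add_comm]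
  rw [Finset.prod_congr rfl hfirst, Finset.prod_congr rfl hsecond, Finset.prod_mul_distrib,
    Finset.prod_mul_distrib, Finset.prod_const, card_range, zpow_sum_range q hq, sumE]
  rw [Finset.prod_range_reflect (fun l => 1 + z⁻¹ * q ^ (2*l+1)) N]
  rw [hcdef]
  have hzN : z ^ (-(N:ℤ)) * z ^ N = 1 := by
    rw [← zpow_natCast z N, ← zpow_add₀ hz]; simp
  have hqN : q ^ ((N:ℤ)^2) * q ^ (-(N:ℤ)^2) = 1 := by
    rw [← zpow_add₀ hq]; simp
  linear_combination ((∏ j ∈ range N, (1 + z⁻¹ * q ^ (2*j+1)))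
      * (∏ i ∈ range N, (1 + z * q ^ (2*i+1))) * (z ^ (-(N:ℤ)) * z ^ N)) * hqN
    + ((∏ j ∈ range N, (1 + z⁻¹ * q ^ (2*j+1)))
      * (∏ i ∈ range N, (1 + z * q ^ (2*i+1)))) * hzN

lemma summable_log_one_add (f : ℕ → ℂ) (hf : Summable f) (h0 : ∀ j, 1 + f j ≠ 0) :
    Summable fun j => Complex.log (1 + f j) := by
  have hnorm : Summable fun j => (3/2 : ℝ) * ‖f j‖ := (hf.norm).mul_left _
  apply Summable.of_norm_bounded_eventually_nat hnorm
  have h2 : Tendsto (fun j => ‖f j‖) atTop (𝓝 0) := by simpa using hf.tendsto_atTop_zero.norm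
  have hsmall : ∀ᶠ j in atTop, ‖f j‖ ≤ 1/2 := by
    filter_upwards [h2.eventually_le_const (by norm_num : (0:ℝ) < 1/2)] with j hj
      using hj
  filter_upwards [hsmall] with j hj
  exact Complex.norm_log_one_add_half_le_self hj

lemma hasProd_one_add (f : ℕ → ℂ) (hf : Summable f) :
    HasProd (fun j => 1 + f j) (∏' j, (1 + f j)) := by
  by_cases h0 : ∀ j, 1 + f j ≠ 0
  · exact (Complex.hasProd_of_hasSum_log (f := fun j => 1 + f j) h0
      (summable_log_one_add f hf h0).hasSum).multipliable.hasProd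
  · push_neg at h0
    obtain ⟨j0, hj0⟩ := h0
    have hzero : HasProd (fun j => 1 + f j) 0 := by
      rw [HasProd]
      have hev : ∀ᶠ s : Finset ℕ in atTop, (0 : ℂ) = ∏ i ∈ s, (1 + f i) := by
        filter_upwards [eventually_ge_atTop ({j0} : Finset ℕ)] with s hs
        exact (Finset.prod_eq_zero (Finset.singleton_subset_iff.mp hs) hj0).symm
      exact Tendsto.congr' hev tendsto_const_nhds
    rwa [hzero.tprod_eq]

lemma tendsto_prod_one_add (f : ℕ → ℂ) (hf : Summable f) :
    Tendsto (fun N => ∏ j ∈ range N, (1 + f j)) atTop (𝓝 (∏' j, (1 + f j))) :=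
  (hasProd_one_add f hf).tendsto_prod_nat

lemma tprod_one_add_ne_zero (f : ℕ → ℂ) (hf : Summable f) (h0 : ∀ j, 1 + f j ≠ 0) :
    (∏' j, (1 + f j)) ≠ 0 := by
  have h := Complex.cexp_tsum_eq_tprod (f := fun j => 1 + f j) h0
    (summable_log_one_add f hf h0)
  rw [← h]
  exact Complex.exp_ne_zero _

end JTP

/-- The infinite p-shifted factorial `(a;p)_∞ = ∏_{j=0}^{∞} (1 - a p^j)`. -/
noncomputable def qPochInf (a p : ℂ) : ℂ := ∏' j : ℕ, (1 - a * p ^ j)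

/-- Jacobi's triple product identity. -/
theorem jacobi_triple_product (q z : ℂ) (hq0 : 0 < ‖q‖)
    (hq1 : ‖q‖ < 1) (hz : z ≠ 0) :
    ∑' k : ℤ, q ^ (k ^ 2) * z ^ k
    = qPochInf (q ^ 2) (q ^ 2) * qPochInf (-(q * z)) (q ^ 2) *
        qPochInf (-(q / z)) (q ^ 2) := by
  classical
  have hq : q ≠ 0 := by
    intro h; rw [h] at hq0; simp at hq0
  have hq1' : ‖q‖ < 1 := hq1
  have hq0' : 0 < ‖q‖ := hq0
  set t : ℂ := q ^ 2 with htdef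
  have htn : ‖t‖ < 1 := by
    rw [htdef, norm_pow]
    exact pow_lt_one₀ (norm_nonneg q) hq1' (by norm_num)
  clear_value t
  have ht1 : ∀ j : ℕ, ‖t * t ^ j‖ < 1 := by
    intro j
    calc ‖t * t ^ j‖ = ‖t‖ * ‖t‖ ^ j := by rw [norm_mul, norm_pow]
      _ ≤ ‖t‖ * 1 :=
          mul_le_mul_of_nonneg_left (pow_le_one₀ (norm_nonneg t) htn.le) (norm_nonneg t)
      _ < 1 := by rwa [mul_one]
  have hfac_ne : ∀ j : ℕ, (1 : ℂ) + -(t * t ^ j) ≠ 0 := by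
    intro j h
    have h1 : t * t ^ j = 1 := by linear_combination -h
    have h2 := ht1 j
    rw [h1, norm_one] at h2
    exact lt_irrefl 1 h2
  have hsum_t : Summable (fun j : ℕ => -(t * t ^ j)) :=
    ((summable_geometric_of_norm_lt_one htn).mul_left t).neg
  set P1 := ∏' j : ℕ, ((1:ℂ) + -(t * t ^ j)) with hP1def
  have hQp_eq : ∀ N, (∏ j ∈ Finset.range N, ((1:ℂ) + -(t * t ^ j))) = JTP.Qp t N := by
    intro N
    refine Finset.prod_congr rfl fun j _ => ?_
    rw [pow_succ']; ring
  have hQp_tendsto : Tendsto (JTP.Qp t) atTop (𝓝 P1) := by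
    have h := JTP.tendsto_prod_one_add _ hsum_t
    exact h.congr hQp_eq
  have hP1_ne : P1 ≠ 0 := JTP.tprod_one_add_ne_zero _ hsum_t hfac_ne
  have hQp_ne : ∀ n, JTP.Qp t n ≠ 0 := by
    intro n
    rw [← hQp_eq]
    exact Finset.prod_ne_zero_iff.mpr fun j _ => hfac_ne j
  obtain ⟨U, hU⟩ : ∃ U : ℝ, ∀ n, ‖JTP.Qp t n‖ ≤ U := by
    obtain ⟨U, hU⟩ := (hQp_tendsto.norm).bddAbove_range
    exact ⟨U, fun n => hU ⟨n, rfl⟩⟩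
  obtain ⟨W, hW⟩ : ∃ W : ℝ, ∀ n, ‖JTP.Qp t n‖⁻¹ ≤ W := by
    have h : Tendsto (fun n => ‖JTP.Qp t n‖⁻¹) atTop (𝓝 ‖P1‖⁻¹) :=
      (hQp_tendsto.norm).inv₀ (by simpa using hP1_ne)
    obtain ⟨W, hW⟩ := h.bddAbove_range
    exact ⟨W, fun n => hW ⟨n, rfl⟩⟩
  have hU0 : 0 ≤ U := le_trans (norm_nonneg _) (hU 0)
  have hW0 : 0 ≤ W := le_trans (inv_nonneg.mpr (norm_nonneg _)) (hW 0)
  set C : ℝ := U * W * W with hCdef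
  have hC0 : 0 ≤ C := mul_nonneg (mul_nonneg hU0 hW0) hW0
  have hgb_bound : ∀ n m, ‖JTP.gb t n m‖ ≤ C := by
    intro n m
    rcases le_or_gt m n with h | h
    · have heq := JTP.gb_mul t h
      have hgbe : JTP.gb t n m = JTP.Qp t n * (JTP.Qp t m)⁻¹ * (JTP.Qp t (n - m))⁻¹ := by
        have hA := hQp_ne m; have hB := hQp_ne (n - m)
        field_simp
        linear_combination heq
      rw [hgbe, norm_mul, norm_mul, norm_inv, norm_inv, hCdef]
      exact mul_le_mul (mul_le_mul (hU n) (hW m) (inv_nonneg.mpr (norm_nonneg _))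
        hU0) (hW (n - m)) (inv_nonneg.mpr (norm_nonneg _)) (mul_nonneg hU0 hW0)
    · rw [JTP.gb_eq_zero t h, norm_zero]; exact hC0
  have hgb_lim : ∀ k : ℤ, Tendsto (fun N : ℕ => JTP.gb t (2*N) ((k + N).toNat)) atTop
      (𝓝 P1⁻¹) := by
    intro k
    have c1 : Tendsto (fun N : ℕ => 2*N) atTop atTop := by
      apply tendsto_atTop_atTop.mpr; intro b; exact ⟨b, fun a ha => by omega⟩
    have c2 : Tendsto (fun N : ℕ => (k + (N:ℤ)).toNat) atTop atTop := by
      apply tendsto_atTop_atTop.mpr; intro b; exact ⟨b + k.natAbs, fun a ha => by omega⟩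
    have c3 : Tendsto (fun N : ℕ => (-k + (N:ℤ)).toNat) atTop atTop := by
      apply tendsto_atTop_atTop.mpr; intro b; exact ⟨b + k.natAbs, fun a ha => by omega⟩
    have haux : Tendsto (fun N : ℕ => JTP.Qp t (2*N) * (JTP.Qp t ((k + (N:ℤ)).toNat))⁻¹ *
        (JTP.Qp t ((-k + (N:ℤ)).toNat))⁻¹) atTop (𝓝 (P1 * P1⁻¹ * P1⁻¹)) :=
      ((hQp_tendsto.comp c1).mul ((hQp_tendsto.comp c2).inv₀ hP1_ne)).mul
        ((hQp_tendsto.comp c3).inv₀ hP1_ne)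
    have hval : P1 * P1⁻¹ * P1⁻¹ = P1⁻¹ := by field_simp
    rw [hval] at haux
    apply haux.congr'
    filter_upwards [eventually_ge_atTop k.natAbs] with N hN
    have hm : (k + (N:ℤ)).toNat ≤ 2*N := by omega
    have hsub : 2*N - (k + (N:ℤ)).toNat = (-k + (N:ℤ)).toNat := by omega
    have heq2 := JTP.gb_mul t hm
    rw [hsub] at heq2
    have hA := hQp_ne ((k + (N:ℤ)).toNat); have hB := hQp_ne ((-k + (N:ℤ)).toNat)
    field_simp
    linear_combination -heq2
  -- bound function
  set R : ℝ := max ‖z‖ ‖z⁻¹‖ with hRdef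
  have hzR : ∀ k : ℤ, ‖z ^ k‖ ≤ R ^ k.natAbs := by
    intro k
    obtain ⟨n, rfl | rfl⟩ := k.eq_nat_or_neg
    · rw [zpow_natCast, norm_pow, Int.natAbs_natCast]
      exact pow_le_pow_left₀ (norm_nonneg z) (le_max_left _ _) n
    · rw [zpow_neg, ← inv_zpow, zpow_natCast, norm_pow, Int.natAbs_neg, Int.natAbs_natCast]
      exact pow_le_pow_left₀ (norm_nonneg _) (le_max_right _ _) n
  have hqz_norm : ∀ k : ℤ, ‖q ^ (k^2) * z ^ k‖ ≤ ‖q‖ ^ ((k^2).toNat) * R ^ k.natAbs := by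
    intro k
    rw [norm_mul]
    have h1 : q ^ (k^2) = q ^ (((k^2).toNat : ℤ)) := by rw [Int.toNat_of_nonneg (sq_nonneg k)]
    rw [h1, zpow_natCast, norm_pow]
    exact mul_le_mul_of_nonneg_left (hzR k) (by positivity)
  set bound : ℤ → ℝ := fun k => C * (‖q‖ ^ ((k^2).toNat) * R ^ k.natAbs) with hbdef
  have hbound_nonneg : ∀ k, 0 ≤ bound k := by
    intro k; rw [hbdef]; positivity
  have hbound_sum : Summable bound := by
    apply Summable.mul_left
    have hnat : Summable (fun n : ℕ => ‖q‖ ^ (n*n) * R ^ n) := by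
      have hR0 : 0 < R := lt_of_lt_of_le (norm_pos_iff.mpr hz) (le_max_left _ _)
      have hrt : Tendsto (fun n : ℕ => (‖q‖^2)^n * (‖q‖ * R)) atTop (𝓝 0) := by
        have := (tendsto_pow_atTop_nhds_zero_of_lt_one (by positivity)
          (by nlinarith : ‖q‖^2 < 1)).mul_const (‖q‖ * R)
        simpa using this
      have hev : ∀ᶠ n in atTop, (‖q‖^2)^n * (‖q‖ * R) ≤ 1/2 := by
        filter_upwards [hrt.eventually_le_const (by norm_num : (0:ℝ) < 1/2)] with n hn
          using hn
      apply summable_of_ratio_norm_eventually_le (by norm_num : (1/2:ℝ) < 1)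
      filter_upwards [hev] with n hn
      have hexp : ‖q‖ ^ ((n+1)*(n+1)) * R ^ (n+1)
          = ((‖q‖^2)^n * (‖q‖ * R)) * (‖q‖ ^ (n*n) * R ^ n) := by
        rw [show (n+1)*(n+1) = n*n + (2*n+1) by ring, pow_add, pow_succ R n, pow_add,
          pow_mul, pow_one]
        ring
      calc ‖‖q‖ ^ ((n+1)*(n+1)) * R ^ (n+1)‖
          = ‖q‖ ^ ((n+1)*(n+1)) * R ^ (n+1) := Real.norm_of_nonneg (by positivity)
        _ = ((‖q‖^2)^n * (‖q‖ * R)) * (‖q‖ ^ (n*n) * R ^ n) := hexp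
        _ ≤ (1/2) * (‖q‖ ^ (n*n) * R ^ n) :=
            mul_le_mul_of_nonneg_right hn (by positivity)
        _ = (1/2) * ‖‖q‖ ^ (n*n) * R ^ n‖ := by rw [Real.norm_of_nonneg (by positivity)]
    have keyp : ∀ n : ℕ, (((n:ℤ)^2).toNat) = n*n := by
      intro n
      rw [sq, ← Int.natCast_mul, Int.toNat_natCast]
    apply Summable.of_nat_of_neg
    · apply hnat.congr; intro n
      rw [keyp n, Int.natAbs_natCast]
    · apply hnat.congr; intro n
      rw [show ((-(n:ℤ))^2) = ((n:ℤ)^2) by ring, keyp n, Int.natAbs_neg, Int.natAbs_natCast]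
  -- Tannery
  set F : ℕ → ℤ → ℂ := fun N k =>
    if k ∈ Finset.Icc (-(N:ℤ)) (N:ℤ) then JTP.gb t (2*N) ((k + N).toNat) * q ^ (k^2) * z ^ k
    else 0 with hFdef
  have hF_tsum : ∀ N, ∑' k : ℤ, F N k
      = (∏ l ∈ Finset.range N, (1 + z * q ^ (2*l+1)))
        * ∏ l ∈ Finset.range N, (1 + z⁻¹ * q ^ (2*l+1)) := by
    intro N
    rw [tsum_eq_sum (s := Finset.Icc (-(N:ℤ)) (N:ℤ)) (fun k hk => if_neg hk)]
    rw [← JTP.finiteJTP q z hq hz N]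
    refine Finset.sum_congr rfl fun k hk => ?_
    rw [if_pos hk, htdef]
  have hF_bound : ∀ N k, ‖F N k‖ ≤ bound k := by
    intro N k
    rw [hFdef]; dsimp only
    split
    · rw [mul_assoc, norm_mul, hbdef]
      exact mul_le_mul (hgb_bound _ _) (hqz_norm k) (norm_nonneg _) hC0
    · rw [norm_zero]; exact hbound_nonneg k
  have hF_lim : ∀ k : ℤ, Tendsto (fun N => F N k) atTop
      (𝓝 (P1⁻¹ * (q ^ (k^2) * z ^ k))) := by
    intro k
    have h := (hgb_lim k).mul_const (q ^ (k^2) * z ^ k)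
    apply h.congr'
    filter_upwards [eventually_ge_atTop k.natAbs] with N hN
    rw [hFdef]; dsimp only
    rw [if_pos (by rw [Finset.mem_Icc]; omega), mul_assoc]
  have htannery := tendsto_tsum_of_dominated_convergence hbound_sum hF_lim
    (Filter.Eventually.of_forall hF_bound)
  -- right-hand side limit
  have hpow : ∀ l : ℕ, q * t ^ l = q ^ (2*l+1) := by
    intro l
    rw [htdef, ← pow_mul, ← pow_succ']
  have hsum2 : Summable (fun l : ℕ => z * q ^ (2*l+1)) := by
    apply ((summable_geometric_of_norm_lt_one htn).mul_left (z * q)).congr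
    intro l
    rw [mul_assoc, hpow]
  have hsum3 : Summable (fun l : ℕ => z⁻¹ * q ^ (2*l+1)) := by
    apply ((summable_geometric_of_norm_lt_one htn).mul_left (z⁻¹ * q)).congr
    intro l
    rw [mul_assoc, hpow]
  set P2 := ∏' l : ℕ, ((1:ℂ) + z * q ^ (2*l+1)) with hP2def
  set P3 := ∏' l : ℕ, ((1:ℂ) + z⁻¹ * q ^ (2*l+1)) with hP3def
  have hRHS : Tendsto (fun N => (∏ l ∈ Finset.range N, (1 + z * q ^ (2*l+1)))
      * ∏ l ∈ Finset.range N, (1 + z⁻¹ * q ^ (2*l+1))) atTop (𝓝 (P2 * P3)) :=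
    (JTP.tendsto_prod_one_add _ hsum2).mul (JTP.tendsto_prod_one_add _ hsum3)
  have hkey : ∑' k : ℤ, P1⁻¹ * (q ^ (k^2) * z ^ k) = P2 * P3 := by
    refine tendsto_nhds_unique (htannery.congr fun N => ?_) hRHS
    exact hF_tsum N
  rw [tsum_mul_left] at hkey
  have hS : ∑' k : ℤ, q ^ (k^2) * z ^ k = P1 * (P2 * P3) := by
    rw [← hkey]
    field_simp
  have e1 : qPochInf t t = P1 := by
    rw [hP1def]
    apply tprod_congr
    intro j
    ring
  have e2 : qPochInf (-(q*z)) t = P2 := by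
    rw [hP2def]
    apply tprod_congr
    intro j
    have h := hpow j
    linear_combination z * h
  have e3 : qPochInf (-(q/z)) t = P3 := by
    rw [hP3def]
    apply tprod_congr
    intro j
    have h := hpow j
    rw [div_eq_mul_inv]
    linear_combination z⁻¹ * h
  rw [e1, e2, e3, hS, mul_assoc]
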